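/- Let c = (6/1849)√123199 − 87150/79507 (one has c > 0) and h₁ = c^{1/3} − (846/1849)·c^{−1/3} + 53/43. Then h₁ lies in the open interval ((√30 − 5)/2, (7 − √19)/6) and satisfies the indifference equation 1 + 3h₁ = g(h₁), where g(x) = ∫₀¹ min(A(x,u), C(x,u)) du. -/
import Mathlib


open intervalIntegral

/-- Expected final rank in Robbins' problem with 4 observations, first two observations
`x₁, x₂`, third accepted iff `≤ h`, fourth always accepted. -/
noncomputable def G (x₁ x₂ h : ℝ) : ℝ :=
  3/2 + h^2 - h + (2 - x₁ - x₂) * (1 - h) + max (h - x₁) 0 + max (h - x₂) 0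

/-- Optimal expected rank from rejecting the second observation:
`C x₁ x₂ = min_{t ∈ [0,1]} G x₁ x₂ t`. -/
noncomputable def C (x₁ x₂ : ℝ) : ℝ := sInf (G x₁ x₂ '' Set.Icc 0 1)

/-- Expected rank from accepting the second observation `u` given first observation `x`. -/
noncomputable def A (x u : ℝ) : ℝ := 1 + (if x ≤ u then (1:ℝ) else 0) + 2*u

/-- Optimal expected rank continuing from step 2 given first observation `x`. -/
noncomputable def g (x : ℝ) : ℝ := ∫ u in (0:ℝ)..(1:ℝ), min (A x u) (C x u)

noncomputable def c : ℝ := (6/1849) * Real.sqrt 123199 - 87150/79507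

/-- The optimal first-stage threshold in Robbins' problem with 4 observations. -/
noncomputable def h₁ : ℝ := c ^ ((1:ℝ)/3) - (846/1849) * c ^ (-(1:ℝ)/3) + 53/43

section RobbinsAux

open MeasureTheory Set

lemma robbins_c_pos : 0 < c := by
  have hs : Real.sqrt 123199 ^ 2 = 123199 := Real.sq_sqrt (by norm_num)
  have h : (338:ℝ) < Real.sqrt 123199 := by
    nlinarith [Real.sqrt_nonneg (123199:ℝ)]
  unfold c; nlinarith

lemma robbins_Cval {x u v t0 : ℝ} (ht0 : t0 ∈ Set.Icc (0:ℝ) 1) (hval : G x u t0 = v)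
    (hlb : ∀ t ∈ Set.Icc (0:ℝ) 1, v ≤ G x u t) : C x u = v := by
  unfold C
  apply le_antisymm
  · exact csInf_le ⟨v, by rintro b ⟨t, ht, rfl⟩; exact hlb t ht⟩ ⟨t0, ht0, hval⟩
  · exact le_csInf ⟨G x u t0, ⟨t0, ht0, rfl⟩⟩ (by rintro b ⟨t, ht, rfl⟩; exact hlb t ht)

lemma robbins_C_ge {x u v : ℝ} (hlb : ∀ t ∈ Set.Icc (0:ℝ) 1, v ≤ G x u t) : v ≤ C x u :=
  le_csInf ⟨G x u 0, ⟨0, by norm_num, rfl⟩⟩ (by rintro b ⟨t, ht, rfl⟩; exact hlb t ht)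

lemma robbins_L1 {x u : ℝ} (hx1 : 27/100 ≤ x) (hx2 : x ≤ 28/100) (hu0 : 0 ≤ u) (hux : u ≤ x) :
    ∀ t ∈ Set.Icc (0:ℝ) 1, 1 + 2*u ≤ G x u t := by
  rintro t ⟨ht0, ht1⟩
  unfold G
  rcases le_total (t - x) 0 with h1 | h1 <;> rcases le_total (t - u) 0 with h2 | h2
  · rw [max_eq_right h1, max_eq_right h2]; nlinarith [sq_nonneg t, mul_nonneg ht0 (sub_nonneg.2 ht1)]
  · rw [max_eq_right h1, max_eq_left h2]; nlinarith [sq_nonneg t, mul_nonneg ht0 (sub_nonneg.2 ht1)]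
  · rw [max_eq_left h1, max_eq_right h2]; nlinarith [sq_nonneg t, mul_nonneg ht0 (sub_nonneg.2 ht1)]
  · rw [max_eq_left h1, max_eq_left h2]; nlinarith [sq_nonneg t, mul_nonneg ht0 (sub_nonneg.2 ht1)]

lemma robbins_L2 {x u : ℝ} (hx1 : 27/100 ≤ x) (hx2 : x ≤ 28/100) (hxu : x ≤ u)
    (hub : u ≤ (2-x)/3) :
    ∀ t ∈ Set.Icc (0:ℝ) 1, 2*u^2 + (x-3)*u + (7/2 - 2*x) ≤ G x u t := by
  rintro t ⟨ht0, ht1⟩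
  unfold G
  rcases le_total (t - x) 0 with h1 | h1 <;> rcases le_total (t - u) 0 with h2 | h2
  · rw [max_eq_right h1, max_eq_right h2]
    nlinarith [sq_nonneg (t-u), sq_nonneg (t-x), mul_nonneg (sub_nonneg.2 hxu) (sub_nonneg.2 ht1),
      sq_nonneg (x-u)]
  · rw [max_eq_right h1, max_eq_left h2]
    nlinarith [sq_nonneg (t-u), sq_nonneg (t-x), sq_nonneg (x-u)]
  · rw [max_eq_left h1, max_eq_right h2]
    nlinarith [sq_nonneg (t-u), sq_nonneg (t-x), sq_nonneg (x-u),
      mul_nonneg (sub_nonneg.2 h1) (sub_nonneg.2 (le_trans hxu hub : x ≤ (2-x)/3))]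
  · rw [max_eq_left h1, max_eq_left h2]
    nlinarith [sq_nonneg (t-u), sq_nonneg (t-x), mul_nonneg (sub_nonneg.2 h2) (sub_nonneg.2 ht1)]

lemma robbins_L3 {x u : ℝ} (hx1 : 27/100 ≤ x) (hx2 : x ≤ 28/100) (hbu : (2-x)/3 ≤ u)
    (hu1 : u ≤ 1) :
    ∀ t ∈ Set.Icc (0:ℝ) 1, (5/2 - x) - (x+u)^2/4 ≤ G x u t := by
  rintro t ⟨ht0, ht1⟩
  unfold G
  rcases le_total (t - x) 0 with h1 | h1 <;> rcases le_total (t - u) 0 with h2 | h2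
  · rw [max_eq_right h1, max_eq_right h2]
    nlinarith [sq_nonneg (2*t - 2 + x + u),
      mul_nonneg (by linarith : (0:ℝ) ≤ x - t) (by linarith : (0:ℝ) ≤ 1 - u)]
  · rw [max_eq_right h1, max_eq_left h2]
    nlinarith [sq_nonneg (2*t - 2 + x + u)]
  · rw [max_eq_left h1, max_eq_right h2]
    nlinarith [sq_nonneg (2*t - 2 + x + u)]
  · rw [max_eq_left h1, max_eq_left h2]
    nlinarith [sq_nonneg (2*t - 2 + x + u), mul_nonneg (sub_nonneg.2 h2) (sub_nonneg.2 ht1),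
      sq_nonneg (t-u)]

lemma robbins_min_eq_F {x : ℝ} (hx1 : 27/100 ≤ x) (hx2 : x ≤ 28/100) :
    ∀ u ∈ Set.Icc (0:ℝ) 1, min (A x u) (C x u) =
      if u < x then 1 + 2*u
      else if u ≤ (2-x)/3 then 2*u^2 + (x-3)*u + (7/2 - 2*x)
      else (5/2 - x) - (x+u)^2/4 := by
  rintro u ⟨hu0, hu1⟩
  by_cases h : u < x
  · rw [if_pos h]
    have hA : A x u = 1 + 2*u := by unfold A; rw [if_neg (not_le.2 h)]; ring
    rw [← hA]
    exact min_eq_left (hA ▸ robbins_C_ge (robbins_L1 hx1 hx2 hu0 h.le))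
  · rw [if_neg h]
    push_neg at h
    have hA : A x u = 2 + 2*u := by unfold A; rw [if_pos h]; ring
    by_cases h2 : u ≤ (2-x)/3
    · rw [if_pos h2]
      have hC : C x u = 2*u^2 + (x-3)*u + (7/2 - 2*x) := by
        refine robbins_Cval ⟨hu0, hu1⟩ ?_ (robbins_L2 hx1 hx2 h h2)
        unfold G
        rw [max_eq_left (by linarith : (0:ℝ) ≤ u - x), max_eq_right (by linarith : u - u ≤ 0)]
        ring
      rw [hC, ← hC]
      refine min_eq_right ?_
      rw [hC, hA]
      nlinarith [mul_nonneg (sub_nonneg.2 h) (sub_nonneg.2 h2)]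
    · rw [if_neg h2]
      push_neg at h2
      have hC : C x u = (5/2 - x) - (x+u)^2/4 := by
        refine robbins_Cval (t0 := 1 - (x+u)/2) ⟨by linarith, by linarith⟩ ?_
          (robbins_L3 hx1 hx2 h2.le hu1)
        unfold G
        rw [max_eq_left (by linarith : (0:ℝ) ≤ 1 - (x+u)/2 - x),
            max_eq_right (by linarith : 1 - (x+u)/2 - u ≤ 0)]
        ring
      rw [hC, ← hC]
      refine min_eq_right ?_
      rw [hC, hA]
      nlinarith [sq_nonneg (x+u)]

lemma robbins_g_eval {x : ℝ} (hx1 : 27/100 ≤ x) (hx2 : x ≤ 28/100) :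
    g x = (x + x^2)
      + ((2/3*((2-x)/3)^3 + ((x-3)/2*((2-x)/3)^2 + (7/2-2*x)*((2-x)/3)))
          - (2/3*x^3 + ((x-3)/2*x^2 + (7/2-2*x)*x)))
      + (((5/2-x)*1 - (x+1)^3/12) - ((5/2-x)*((2-x)/3) - (x+(2-x)/3)^3/12)) := by
  have h0x : (0:ℝ) ≤ x := by linarith
  have hxb : x ≤ (2-x)/3 := by linarith
  have hb1 : (2-x)/3 ≤ 1 := by linarith
  set F : ℝ → ℝ := fun u =>
      if u < x then 1 + 2*u
      else if u ≤ (2-x)/3 then 2*u^2 + (x-3)*u + (7/2 - 2*x)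
      else (5/2 - x) - (x+u)^2/4 with hFdef
  have h01 : g x = ∫ u in (0:ℝ)..1, F u := by
    unfold g
    refine integral_congr fun u hu => ?_
    rw [Set.uIcc_of_le (by norm_num : (0:ℝ) ≤ 1)] at hu
    exact robbins_min_eq_F hx1 hx2 u hu
  have hax : ∀ᵐ (u : ℝ), u ≠ x := by
    refine MeasureTheory.ae_iff.mpr ?_
    simp only [not_not]
    simpa [Set.setOf_eq_eq_singleton] using Real.volume_singleton
  have cont1 : Continuous (fun u : ℝ => 1 + 2*u) := by continuity
  have cont2 : Continuous (fun u : ℝ => 2*u^2 + (x-3)*u + (7/2 - 2*x)) := by continuity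
  have cont3 : Continuous (fun u : ℝ => (5/2 - x) - (x+u)^2/4) := by continuity
  have hFi1 : IntervalIntegrable F volume 0 x := by
    rw [intervalIntegrable_iff_integrableOn_Ioc_of_le h0x]
    refine (cont1.integrableOn_Ioc).congr ?_
    refine (ae_restrict_iff' measurableSet_Ioc).mpr ?_
    filter_upwards [hax] with u hu hmem
    have : u < x := lt_of_le_of_ne hmem.2 hu
    simp only [hFdef, if_pos this]
  have hFi2 : IntervalIntegrable F volume x ((2-x)/3) := by
    rw [intervalIntegrable_iff_integrableOn_Ioc_of_le hxb]
    refine (cont2.integrableOn_Ioc).congr_fun (fun u hu => ?_) measurableSet_Ioc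
    simp only [hFdef, if_neg (not_lt.2 hu.1.le), if_pos hu.2]
  have hFi3 : IntervalIntegrable F volume ((2-x)/3) 1 := by
    rw [intervalIntegrable_iff_integrableOn_Ioc_of_le hb1]
    refine (cont3.integrableOn_Ioc).congr_fun (fun u hu => ?_) measurableSet_Ioc
    have hx' : ¬ u < x := not_lt.2 (le_trans hxb hu.1.le)
    simp only [hFdef, if_neg hx', if_neg (not_le.2 hu.1)]
  have split : (∫ u in (0:ℝ)..1, F u)
      = (∫ u in (0:ℝ)..x, F u) + (∫ u in x..((2-x)/3), F u) + (∫ u in ((2-x)/3)..1, F u) := by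
    rw [integral_add_adjacent_intervals hFi1 hFi2,
        integral_add_adjacent_intervals (hFi1.trans hFi2) hFi3]
  have e1 : (∫ u in (0:ℝ)..x, F u) = x + x^2 := by
    have : (∫ u in (0:ℝ)..x, F u) = ∫ u in (0:ℝ)..x, (1 + 2*u) := by
      refine integral_congr_ae ?_
      filter_upwards [hax] with u hu hmem
      rw [Set.uIoc_of_le h0x] at hmem
      have : u < x := lt_of_le_of_ne hmem.2 hu
      simp only [hFdef, if_pos this]
    rw [this]
    have := integral_eq_sub_of_hasDerivAt (f := fun v : ℝ => v + v^2)
      (f' := fun v : ℝ => 1 + 2*v) (a := (0:ℝ)) (b := x)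
      (fun u _ => by
        have h := (hasDerivAt_id u).add (hasDerivAt_pow 2 u)
        have hv : (1:ℝ) + 2*u = 1 + ↑(2:ℕ) * u ^ (2-1) := by push_cast; ring
        show HasDerivAt _ ((1:ℝ) + 2*u) u
        rw [hv]; exact h)
      (cont1.intervalIntegrable 0 x)
    rw [this]; ring
  have e2 : (∫ u in x..((2-x)/3), F u)
      = (2/3*((2-x)/3)^3 + ((x-3)/2*((2-x)/3)^2 + (7/2-2*x)*((2-x)/3)))
        - (2/3*x^3 + ((x-3)/2*x^2 + (7/2-2*x)*x)) := by
    have : (∫ u in x..((2-x)/3), F u) = ∫ u in x..((2-x)/3), (2*u^2 + (x-3)*u + (7/2 - 2*x)) := by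
      refine integral_congr_ae (Filter.Eventually.of_forall fun u hmem => ?_)
      rw [Set.uIoc_of_le hxb] at hmem
      simp only [hFdef, if_neg (not_lt.2 hmem.1.le), if_pos hmem.2]
    rw [this]
    have := integral_eq_sub_of_hasDerivAt
      (f := fun v : ℝ => 2/3*v^3 + ((x-3)/2*v^2 + (7/2-2*x)*v))
      (f' := fun v : ℝ => 2*v^2 + (x-3)*v + (7/2 - 2*x)) (a := x) (b := (2-x)/3)
      (fun u _ => by
        have h := ((hasDerivAt_pow 3 u).const_mul ((2:ℝ)/3)).add
          (((hasDerivAt_pow 2 u).const_mul ((x-3)/2)).add ((hasDerivAt_id u).const_mul (7/2-2*x)))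
        have hv : 2*u^2 + (x-3)*u + (7/2 - 2*x)
            = (2:ℝ)/3 * (↑(3:ℕ) * u ^ (3-1)) + ((x-3)/2 * (↑(2:ℕ) * u ^ (2-1)) + (7/2-2*x) * 1) := by
          push_cast; ring
        show HasDerivAt _ (2*u^2 + (x-3)*u + (7/2 - 2*x)) u
        rw [hv]; exact h)
      (cont2.intervalIntegrable _ _)
    rw [this]
  have e3 : (∫ u in ((2-x)/3)..1, F u)
      = ((5/2-x)*1 - (x+1)^3/12) - ((5/2-x)*((2-x)/3) - (x+(2-x)/3)^3/12) := by
    have : (∫ u in ((2-x)/3)..1, F u) = ∫ u in ((2-x)/3)..1, ((5/2 - x) - (x+u)^2/4) := by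
      refine integral_congr_ae (Filter.Eventually.of_forall fun u hmem => ?_)
      rw [Set.uIoc_of_le hb1] at hmem
      have hx' : ¬ u < x := not_lt.2 (le_trans hxb hmem.1.le)
      simp only [hFdef, if_neg hx', if_neg (not_le.2 hmem.1)]
    rw [this]
    have := integral_eq_sub_of_hasDerivAt
      (f := fun v : ℝ => (5/2-x)*v - (x+v)^3/12)
      (f' := fun v : ℝ => (5/2 - x) - (x+v)^2/4) (a := (2-x)/3) (b := 1)
      (fun u _ => by
        have hb : HasDerivAt (fun v : ℝ => (x+v)^3) (↑(3:ℕ) * (x+u)^(3-1) * 1) u :=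
          (((hasDerivAt_id u).const_add x).pow 3)
        have h := ((hasDerivAt_id u).const_mul ((5:ℝ)/2-x)).sub (hb.div_const 12)
        have hv : (5/2 - x) - (x+u)^2/4
            = ((5:ℝ)/2-x) * 1 - (↑(3:ℕ) * (x+u)^(3-1) * 1)/12 := by push_cast; ring
        show HasDerivAt _ ((5/2 - x) - (x+u)^2/4) u
        rw [hv]; exact h)
      (cont3.intervalIntegrable _ _)
    rw [this]
  rw [h01, split, e1, e2, e3]

lemma robbins_h1_facts :
    27/100 ≤ h₁ ∧ h₁ ≤ 28/100 ∧ 43*h₁^3 - 159*h₁^2 + 255*h₁ - 59 = 0 := by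
  have hs : Real.sqrt 123199 ^ 2 = 123199 := Real.sq_sqrt (by norm_num)
  have hsl : (3509971/10000:ℝ) < Real.sqrt 123199 := by
    nlinarith [Real.sqrt_nonneg (123199:ℝ)]
  have hsu : Real.sqrt 123199 < 351 := by nlinarith [Real.sqrt_nonneg (123199:ℝ)]
  set y : ℝ := c ^ ((1:ℝ)/3) with hy
  have hypos : 0 < y := Real.rpow_pos_of_pos robbins_c_pos _
  have hyne : y ≠ 0 := ne_of_gt hypos
  have hy3 : y^3 = c := by
    rw [hy, ← Real.rpow_natCast (c ^ ((1:ℝ)/3)) 3, ← Real.rpow_mul robbins_c_pos.le]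
    norm_num
  have hcl : (3495/10000:ℝ)^3 ≤ c := by unfold c; nlinarith
  have hcu : c ≤ (3504/10000:ℝ)^3 := by unfold c; nlinarith
  have hyl : (3495/10000:ℝ) ≤ y := by
    nlinarith [sq_nonneg (y + 3495/10000), sq_nonneg (y - 3495/10000), hypos.le]
  have hyu : y ≤ (3504/10000:ℝ) := by
    nlinarith [sq_nonneg (y + 3504/10000), sq_nonneg (y - 3504/10000), hypos.le]
  have hinvl : (3504/10000:ℝ)⁻¹ ≤ y⁻¹ := inv_anti₀ hypos hyu
  have hinvu : y⁻¹ ≤ (3495/10000:ℝ)⁻¹ := inv_anti₀ (by norm_num) hyl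
  have hinv : c ^ (-(1:ℝ)/3) = y⁻¹ := by
    rw [show (-(1:ℝ)/3) = -((1:ℝ)/3) by ring, Real.rpow_neg robbins_c_pos.le, hy]
  have hzx : h₁ = (y - (846/1849)*y⁻¹) + 53/43 := by
    unfold h₁; rw [hinv, hy]
  refine ⟨?_, ?_, ?_⟩
  · rw [hzx]
    have e1 : ((3504:ℝ)/10000)⁻¹ = 10000/3504 := by norm_num
    have e2 : ((3495:ℝ)/10000)⁻¹ = 10000/3495 := by norm_num
    rw [e1] at hinvl; rw [e2] at hinvu
    nlinarith
  · rw [hzx]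
    have e1 : ((3504:ℝ)/10000)⁻¹ = 10000/3504 := by norm_num
    have e2 : ((3495:ℝ)/10000)⁻¹ = 10000/3495 := by norm_num
    rw [e1] at hinvl; rw [e2] at hinvu
    nlinarith
  · have hcne : c ≠ 0 := ne_of_gt robbins_c_pos
    have hq : c^2 + (174300/79507)*c = (846/1849)^3 := by
      unfold c; linear_combination (36/3418801:ℝ) * hs
    have h1 : y * y⁻¹ = 1 := mul_inv_cancel₀ hyne
    have h2 : (y⁻¹)^3 = c⁻¹ := by rw [inv_pow, hy3]
    have h3 : (846/1849:ℝ)^3 * c⁻¹ = c + 174300/79507 := by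
      linear_combination (-c⁻¹) * hq + (c + 174300/79507) * (mul_inv_cancel₀ hcne)
    have hz3 : (y - (846/1849)*y⁻¹)^3
        = -(174300/79507) - 3*(846/1849)*(y - (846/1849)*y⁻¹) := by
      linear_combination hy3 - h3 + (-3*(846/1849)*y + 3*(846/1849)^2*y⁻¹) * h1
        - (846/1849)^3 * h2
    rw [hzx]
    linear_combination 43 * hz3

end RobbinsAux

theorem robbins_n4_h1 :
    0 < c ∧
    h₁ ∈ Set.Ioo ((Real.sqrt 30 - 5)/2) ((7 - Real.sqrt 19)/6) ∧
    1 + 3 * h₁ = g h₁ := by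
  obtain ⟨hb1, hb2, hcubic⟩ := robbins_h1_facts
  refine ⟨robbins_c_pos, ⟨?_, ?_⟩, ?_⟩
  · have h30 : Real.sqrt 30 < 554/100 := by
      nlinarith [Real.sq_sqrt (show (0:ℝ) ≤ 30 by norm_num), Real.sqrt_nonneg (30:ℝ)]
    linarith
  · have h19 : Real.sqrt 19 < 53/10 := by
      nlinarith [Real.sq_sqrt (show (0:ℝ) ≤ 19 by norm_num), Real.sqrt_nonneg (19:ℝ)]
    linarith
  · rw [robbins_g_eval hb1 hb2]
    linear_combination (1/36:ℝ) * hcubic
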